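/- arXiv:1712.05315 — 3 statements merged into one kernel-verified Lean document; each statement's English description precedes it below -/
import Mathlib

section
/- (Weighted semi-hyperboloidal decomposition of the wave operator.) Let u be a C² function on K and let 𝓛 denote the first-order operator 𝓛 := (s/t)²∂_t + 2(x^a/t)∂̲_a (sum over a = 1,2). Then for every (t,x) ∈ K with x ≠ 0: □u(t,x) = (t−r)^{−1/2} t^{−1/2} · 𝓛[ (t−r)^{1/2} t^{1/2} ∂_t u ](t,x) + ((t−r)/(2t²))(2 + 3r/t) ∂_t u(t,x) − Σ_a ∂̲_a ∂̲_a u(t,x). -/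
/-!
Each first-order operator involved is `u ↦ Du(p) (V p)` for an explicit vector `V p`; hence `𝓛`
is a derivation and every second-order term is a value of the symmetric Hessian `D²u(p)`. On the
Hessian, `𝓛 ∂_t u - Σ_a ∂̲_a ∂̲_a u` and `□u` agree, and differentiating the coefficients `x^a/t`
of `∂̲_a` leaves the first-order term `(2/t - r²/t³) ∂_t u`. The weight contributes
`𝓛 log ((t - r)^{1/2} t^{1/2}) = (t - r)/(2t²) + (t² + r²)/(2t³)`, by `𝓛 t = (t² + r²)/t²` and
`𝓛 r = 2r/t`, and the two first-order coefficients combine to `((t - r)/(2t²))(2 + 3r/t)`.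
-/

noncomputable section

open Real MeasureTheory

abbrev Pt := ℝ × ℝ × ℝ

def tc (p : Pt) : ℝ := p.1

def rad (p : Pt) : ℝ := Real.sqrt (p.2.1 ^ 2 + p.2.2 ^ 2)

def sv (p : Pt) : ℝ := Real.sqrt (tc p ^ 2 - rad p ^ 2)

def dir (α : Fin 3) : Pt := if α = 0 then (1, 0, 0) else if α = 1 then (0, 1, 0) else (0, 0, 1)

def xc (a : Fin 2) (p : Pt) : ℝ := if a = 0 then p.2.1 else p.2.2

def pd (α : Fin 3) (u : Pt → ℝ) : Pt → ℝ := fun p => fderiv ℝ u p (dir α)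

def Lb (a : Fin 2) (u : Pt → ℝ) : Pt → ℝ := fun p => xc a p * pd 0 u p + tc p * pd a.succ u p

def pdu (a : Fin 2) (u : Pt → ℝ) : Pt → ℝ := fun p => (xc a p / tc p) * pd 0 u p + pd a.succ u p

def Box (u : Pt → ℝ) : Pt → ℝ := fun p => pd 0 (pd 0 u) p - pd 1 (pd 1 u) p - pd 2 (pd 2 u) p

def Kset : Set Pt := {p | rad p + 1 < tc p}

def Kslab (s0 s1 : ℝ) : Set Pt :=
  {p | p ∈ Kset ∧ Real.sqrt (s0 ^ 2 + rad p ^ 2) ≤ tc p ∧ tc p ≤ Real.sqrt (s1 ^ 2 + rad p ^ 2)}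

def Hyp (σ : ℝ) : Set Pt := {p | tc p = Real.sqrt (σ ^ 2 + rad p ^ 2)}

def L2H (σ : ℝ) (u : Pt → ℝ) : ℝ :=
  Real.sqrt (∫ y : ℝ × ℝ, (u (Real.sqrt (σ ^ 2 + y.1 ^ 2 + y.2 ^ 2), y)) ^ 2)

def pdI : List (Fin 3) → (Pt → ℝ) → Pt → ℝ
  | [], u => u
  | α :: I, u => pd α (pdI I u)

def LbJ : List (Fin 2) → (Pt → ℝ) → Pt → ℝ
  | [], u => u
  | a :: J, u => Lb a (LbJ J u)

/-- The first-order operator `𝓛 := (s/t)²∂_t + 2(x^a/t)∂̲_a`. -/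
def calL (u : Pt → ℝ) : Pt → ℝ :=
  fun p => (sv p / tc p) ^ 2 * pd 0 u p + ∑ a : Fin 2, 2 * (xc a p / tc p) * pdu a u p

lemma isOpen_Kset : IsOpen Kset :=
  isOpen_lt (by unfold rad; fun_prop) continuous_fst

lemma rad_eq : rad = fun q : Pt => √(q.2.1 ^ 2 + q.2.2 ^ 2) := rfl

lemma rad_nonneg (p : Pt) : 0 ≤ rad p := Real.sqrt_nonneg _

lemma rad_sq (p : Pt) : rad p ^ 2 = p.2.1 ^ 2 + p.2.2 ^ 2 :=
  Real.sq_sqrt (by positivity)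

lemma rad_pos {p : Pt} (hx : p.2 ≠ 0) : 0 < rad p := by
  refine Real.sqrt_pos.2 ?_
  rcases eq_or_ne p.2.1 0 with h1 | h1
  · have h2 : p.2.2 ≠ 0 := fun h2 => hx (Prod.ext h1 h2)
    positivity
  · positivity

lemma tc_pos_of_rad_lt {p : Pt} (hp : rad p < tc p) : 0 < tc p :=
  (rad_nonneg p).trans_lt hp

lemma sv_sq {p : Pt} (h : rad p ≤ tc p) : sv p ^ 2 = tc p ^ 2 - rad p ^ 2 :=
  Real.sq_sqrt (by nlinarith [rad_nonneg p])

lemma xc_zero : xc 0 = fun p : Pt => p.2.1 := rfl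

lemma xc_one : xc 1 = fun p : Pt => p.2.2 := rfl

lemma differentiableAt_xc (a : Fin 2) (p : Pt) : DifferentiableAt ℝ (xc a) p := by
  fin_cases a <;> simp only [Fin.zero_eta, Fin.mk_one, xc_zero, xc_one] <;> fun_prop

lemma fderiv_xc_apply (a : Fin 2) (p v : Pt) : fderiv ℝ (xc a) p v = xc a v := by
  fin_cases a
  · rw [Fin.zero_eta, xc_zero, (hasFDerivAt_snd.fst).fderiv]; rfl
  · rw [Fin.mk_one, xc_one, (hasFDerivAt_snd.snd).fderiv]; rfl

lemma differentiableAt_tc (p : Pt) : DifferentiableAt ℝ tc p := differentiableAt_fst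

lemma fderiv_tc_apply (p v : Pt) : fderiv ℝ tc p v = tc v := by
  rw [show tc = Prod.fst from rfl, fderiv_fst]; rfl

lemma differentiableAt_rad {p : Pt} (hx : p.2 ≠ 0) : DifferentiableAt ℝ rad p := by
  rw [rad_eq]
  exact DifferentiableAt.sqrt (by fun_prop) (Real.sqrt_pos.1 (rad_pos hx)).ne'

lemma fderiv_rad_apply {p : Pt} (hx : p.2 ≠ 0) (v : Pt) :
    fderiv ℝ rad p v = (p.2.1 * v.2.1 + p.2.2 * v.2.2) / rad p := by
  have hsnd : HasFDerivAt (𝕜 := ℝ) (Prod.snd : Pt → ℝ × ℝ) _ p := hasFDerivAt_snd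
  have hsq := (hsnd.fst.pow 2).fun_add (hsnd.snd.pow 2)
  rw [rad_eq, (hsq.sqrt (Real.sqrt_pos.1 (rad_pos hx)).ne').fderiv]
  simp only [one_div, mul_inv_rev, Nat.add_one_sub_one, pow_one, nsmul_eq_mul, Nat.cast_ofNat,
    smul_add, add_apply, smul_apply, ContinuousLinearMap.comp_apply, ContinuousLinearMap.coe_snd',
    ContinuousLinearMap.coe_fst', smul_eq_mul]
  ring

def semiHypVec (a : Fin 2) (p : Pt) : Pt := (xc a p / tc p) • dir 0 + dir a.succ

def calLVec (p : Pt) : Pt :=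
  (sv p / tc p) ^ 2 • dir 0 + ∑ a : Fin 2, (2 * (xc a p / tc p)) • semiHypVec a p

lemma pdu_eq_fderiv (a : Fin 2) (u : Pt → ℝ) (p : Pt) :
    pdu a u p = fderiv ℝ u p (semiHypVec a p) := by
  simp [pdu, semiHypVec, pd]

lemma calL_eq_fderiv (u : Pt → ℝ) (p : Pt) : calL u p = fderiv ℝ u p (calLVec p) := by
  simp [calL, calLVec, pdu_eq_fderiv, pd]

lemma tc_semiHypVec (a : Fin 2) (p : Pt) : tc (semiHypVec a p) = xc a p / tc p := by
  fin_cases a <;> simp [semiHypVec, tc, dir]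

lemma xc_semiHypVec (a : Fin 2) (p : Pt) : xc a (semiHypVec a p) = 1 := by
  fin_cases a <;> simp [semiHypVec, xc, dir]

lemma fderiv_semiHypVec_self (a : Fin 2) {p : Pt} (ht : tc p ≠ 0) :
    fderiv ℝ (semiHypVec a) p (semiHypVec a p) = (1 / tc p - xc a p ^ 2 / tc p ^ 3) • dir 0 := by
  have h : HasFDerivAt (fun q => (xc a q * (tc q)⁻¹) • dir 0 + dir a.succ) _ p :=
    (((differentiableAt_xc a p).hasFDerivAt.mul
      ((hasDerivAt_inv ht).comp_hasFDerivAt p (differentiableAt_tc p).hasFDerivAt)).smul_const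
        (dir 0)).add_const (dir a.succ)
  rw [show (fun q => (xc a q * (tc q)⁻¹) • dir 0 + dir a.succ) = semiHypVec a by
    funext q; simp [semiHypVec, div_eq_mul_inv]] at h
  rw [h.fderiv]
  simp only [ContinuousLinearMap.smulRight_apply, add_apply, smul_apply, Function.comp_apply,
    fderiv_tc_apply, tc_semiHypVec, fderiv_xc_apply, xc_semiHypVec, smul_eq_mul]
  congr 1
  field_simp
  ring

lemma fderiv_fderiv_apply_field {𝕜 E F : Type*} [NontriviallyNormedField 𝕜]
    [NormedAddCommGroup E] [NormedSpace 𝕜 E] [NormedAddCommGroup F] [NormedSpace 𝕜 F]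
    {f : E → F} {W : E → E} {x : E} (hf : DifferentiableAt 𝕜 (fderiv 𝕜 f) x)
    (hW : DifferentiableAt 𝕜 W x) (v : E) :
    fderiv 𝕜 (fun y => fderiv 𝕜 f y (W y)) x v =
      fderiv 𝕜 (fderiv 𝕜 f) x v (W x) + fderiv 𝕜 f x (fderiv 𝕜 W x v) := by
  rw [fderiv_clm_apply hf hW]
  simp only [add_apply, ContinuousLinearMap.comp_apply, ContinuousLinearMap.flip_apply, add_comm]

lemma ContDiffAt.differentiableAt_fderiv {𝕜 E F : Type*} [NontriviallyNormedField 𝕜]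
    [NormedAddCommGroup E] [NormedSpace 𝕜 E] [NormedAddCommGroup F] [NormedSpace 𝕜 F]
    {f : E → F} {x : E} (hf : ContDiffAt 𝕜 2 f x) : DifferentiableAt 𝕜 (fderiv 𝕜 f) x :=
  (hf.fderiv_right (m := 1) le_rfl).differentiableAt one_ne_zero

section SecondOrder

variable {u : Pt → ℝ} {p : Pt} (hu : DifferentiableAt ℝ (fderiv ℝ u) p)
include hu

lemma fderiv_pd_apply (α : Fin 3) (v : Pt) :
    fderiv ℝ (pd α u) p v = fderiv ℝ (fderiv ℝ u) p v (dir α) := by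
  show fderiv ℝ (fun q => fderiv ℝ u q (dir α)) p v = _
  simpa using fderiv_fderiv_apply_field hu (differentiableAt_const (dir α)) v

lemma differentiableAt_pd (α : Fin 3) : DifferentiableAt ℝ (pd α u) p :=
  hu.clm_apply (differentiableAt_const _)

lemma pd_pd (α β : Fin 3) : pd α (pd β u) p = fderiv ℝ (fderiv ℝ u) p (dir α) (dir β) :=
  fderiv_pd_apply hu β (dir α)

lemma calL_pd (α : Fin 3) : calL (pd α u) p = fderiv ℝ (fderiv ℝ u) p (calLVec p) (dir α) := by
  rw [calL_eq_fderiv, fderiv_pd_apply hu]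

lemma pdu_pdu (a : Fin 2) (ht : tc p ≠ 0) :
    pdu a (pdu a u) p = fderiv ℝ (fderiv ℝ u) p (semiHypVec a p) (semiHypVec a p)
      + (1 / tc p - xc a p ^ 2 / tc p ^ 3) * pd 0 u p := by
  have hW : DifferentiableAt ℝ (semiHypVec a) p := by
    have := differentiableAt_xc a p
    have := differentiableAt_tc p
    unfold semiHypVec
    fun_prop (disch := exact ht)
  rw [pdu_eq_fderiv, show pdu a u = fun q => fderiv ℝ u q (semiHypVec a q) from
    funext (pdu_eq_fderiv a u), fderiv_fderiv_apply_field hu hW, fderiv_semiHypVec_self a ht,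
    map_smul, smul_eq_mul, pd]

end SecondOrder

lemma symm_apply_calLVec_sub_sum_semiHypVec (B : Pt →L[ℝ] Pt →L[ℝ] ℝ)
    (hB : ∀ v w, B v w = B w v) {p : Pt} (hp : rad p < tc p) :
    B (calLVec p) (dir 0) - ∑ a : Fin 2, B (semiHypVec a p) (semiHypVec a p) =
      B (dir 0) (dir 0) - B (dir 1) (dir 1) - B (dir 2) (dir 2) := by
  have ht : tc p ≠ 0 := (tc_pos_of_rad_lt hp).ne'
  simp only [calLVec, semiHypVec, Fin.sum_univ_two, map_add, map_smul, add_apply, smul_apply,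
    smul_eq_mul, Fin.succ_zero_eq_one, Fin.succ_one_eq_two, xc_zero, xc_one]
  rw [hB (dir 1) (dir 0), hB (dir 2) (dir 0)]
  field_simp
  linear_combination B (dir 0) (dir 0) * (sv_sq hp.le - rad_sq p)

theorem box_eq_calL_pd_sub_sum_pdu_pdu {u : Pt → ℝ} {p : Pt} (hu : ContDiffAt ℝ 2 u p)
    (hp : rad p < tc p) :
    Box u p = calL (pd 0 u) p - ∑ a : Fin 2, pdu a (pdu a u) p
      + (2 / tc p - rad p ^ 2 / tc p ^ 3) * pd 0 u p := by
  have ht := (tc_pos_of_rad_lt hp).ne'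
  have hu' := hu.differentiableAt_fderiv
  have hsymm := symm_apply_calLVec_sub_sum_semiHypVec _ (hu.isSymmSndFDerivAt (by simp)) hp
  simp only [Box, pd_pd hu', calL_pd hu', pdu_pdu hu' _ ht, Fin.sum_univ_two, xc_zero, xc_one,
    rad_sq] at hsymm ⊢
  linear_combination -hsymm

section Derivation

variable {f g : Pt → ℝ} {p : Pt}

lemma calL_mul (hf : DifferentiableAt ℝ f p) (hg : DifferentiableAt ℝ g p) :
    calL (fun q => f q * g q) p = f p * calL g p + g p * calL f p := by
  simp only [calL_eq_fderiv, fderiv_fun_mul hf hg, add_apply, smul_apply, smul_eq_mul]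

lemma calL_sub (hf : DifferentiableAt ℝ f p) (hg : DifferentiableAt ℝ g p) :
    calL (fun q => f q - g q) p = calL f p - calL g p := by
  simp only [calL_eq_fderiv, fderiv_fun_sub hf hg, sub_apply]

lemma calL_sqrt (hf : DifferentiableAt ℝ f p) (hp : f p ≠ 0) :
    calL (fun q => √(f q)) p = calL f p / (2 * √(f p)) := by
  simp only [calL_eq_fderiv, fderiv_sqrt hf hp, smul_apply, smul_eq_mul]
  ring

end Derivation

lemma calLVec_eq {p : Pt} (hp : rad p < tc p) :
    calLVec p = ((tc p ^ 2 + rad p ^ 2) / tc p ^ 2, 2 * p.2.1 / tc p, 2 * p.2.2 / tc p) := by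
  have ht : p.1 ≠ 0 := (tc_pos_of_rad_lt hp).ne'
  have hs := sv_sq hp.le
  simp only [tc, calLVec, div_pow, dir, Fin.isValue, ↓reduceIte, Prod.smul_mk, smul_eq_mul, mul_one,
    mul_zero, xc, semiHypVec, Fin.succ_ne_zero, smul_add, smul_ite, Fin.sum_univ_two,
    Fin.succ_zero_eq_one, Prod.mk_add_mk, add_zero, zero_add, one_ne_zero, Fin.succ_one_eq_two,
    Fin.reduceEq, Prod.mk.injEq] at hs ⊢
  refine ⟨?_, ?_, ?_⟩
  · field_simp
    linear_combination hs - 2 * rad_sq p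
  all_goals ring

lemma calL_tc {p : Pt} (hp : rad p < tc p) : calL tc p = (tc p ^ 2 + rad p ^ 2) / tc p ^ 2 := by
  rw [calL_eq_fderiv, fderiv_tc_apply, calLVec_eq hp]
  rfl

lemma calL_rad {p : Pt} (hp : rad p < tc p) (hx : p.2 ≠ 0) : calL rad p = 2 * rad p / tc p := by
  rw [calL_eq_fderiv, fderiv_rad_apply hx, calLVec_eq hp]
  calc _ = 2 * rad p * rad p / (tc p * rad p) := by rw [mul_assoc, ← sq, rad_sq]; ring
    _ = 2 * rad p / tc p := mul_div_mul_right _ _ (rad_pos hx).ne'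

lemma calL_weight {p : Pt} (hp : rad p < tc p) (hx : p.2 ≠ 0) :
    calL (fun q => √(tc q - rad q) * √(tc q)) p =
      √(tc p - rad p) * √(tc p) *
        ((tc p - rad p) / (2 * tc p ^ 2) + (tc p ^ 2 + rad p ^ 2) / (2 * tc p ^ 3)) := by
  have ht := tc_pos_of_rad_lt hp
  have htr : 0 < tc p - rad p := sub_pos.2 hp
  have hdt := differentiableAt_tc p
  have hdtr : DifferentiableAt ℝ (fun q => tc q - rad q) p := hdt.sub (differentiableAt_rad hx)
  rw [calL_mul (hdtr.sqrt htr.ne') (hdt.sqrt ht.ne'), calL_sqrt hdt ht.ne', calL_sqrt hdtr htr.ne',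
    calL_sub hdt (differentiableAt_rad hx), calL_tc hp, calL_rad hp hx]
  field_simp
  rw [Real.sq_sqrt htr.le, Real.sq_sqrt ht.le]
  ring

/-- Weighted semi-hyperboloidal decomposition of the wave operator:
`□u = (t−r)^{−1/2}t^{−1/2} 𝓛[(t−r)^{1/2}t^{1/2}∂_t u] + ((t−r)/2t²)(2+3r/t)∂_t u
  − Σ_a ∂̲_a∂̲_a u` on `K` away from `x = 0`. -/
theorem weighted_semi_hyperboloidal_decomposition (u : Pt → ℝ)
    (hu : ContDiffOn ℝ 2 u Kset) (p : Pt) (hp : p ∈ Kset) (hx : p.2 ≠ 0) :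
    Box u p =
      (Real.sqrt (tc p - rad p))⁻¹ * (Real.sqrt (tc p))⁻¹ *
          calL (fun q => Real.sqrt (tc q - rad q) * Real.sqrt (tc q) * pd 0 u q) p
        + ((tc p - rad p) / (2 * tc p ^ 2)) * (2 + 3 * rad p / tc p) * pd 0 u p
        - ∑ a : Fin 2, pdu a (pdu a u) p := by
  have hrt : rad p < tc p := by simp only [Kset, Set.mem_ofPred_eq] at hp; linarith
  have hu2 : ContDiffAt ℝ 2 u p := hu.contDiffAt (isOpen_Kset.mem_nhds hp)
  have ht := tc_pos_of_rad_lt hrt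
  have htr : 0 < tc p - rad p := sub_pos.2 hrt
  have hw : DifferentiableAt ℝ (fun q => √(tc q - rad q) * √(tc q)) p :=
    (((differentiableAt_tc p).sub (differentiableAt_rad hx)).sqrt htr.ne').mul
      ((differentiableAt_tc p).sqrt ht.ne')
  rw [box_eq_calL_pd_sub_sum_pdu_pdu hu2 hrt,
    calL_mul hw (differentiableAt_pd hu2.differentiableAt_fderiv 0), calL_weight hrt hx]
  field_simp
  ring
end
end

section
/- (Kirchhoff kernel integral bound away from the light cone.) For (t,x) with t ≥ 2, x ∈ ℝ², and λ ∈ (0,1), define I(λ) := ∫_{D_λ} ((1−λ)² − |y|²)^{−1/2} dy, where D_λ := { y ∈ ℝ² : |y| ≤ 1−λ and |x/t + y| ≤ λ − 1/t }. Then for every ε₀ > 0 there exists a constant C(ε₀) > 0 such that for all (t,x) ∈ K with t ≥ 2 and (t−|x|)/t > ε₀: ∫_{2/t}^{1} λ^{−2} I(λ) dλ ≤ C(ε₀). -/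
noncomputable section

open Real MeasureTheory

/-- The Kirchhoff kernel integral
`I(λ) = ∫_{D_λ} ((1−λ)² − |y|²)^{−1/2} dy`, where
`D_λ = {y : |y| ≤ 1−λ, |x/t + y| ≤ λ − 1/t}`. -/
def Ikern (t : ℝ) (x : ℝ × ℝ) (lam : ℝ) : ℝ :=
  ∫ y in {y : ℝ × ℝ | Real.sqrt (y.1 ^ 2 + y.2 ^ 2) ≤ 1 - lam ∧
      Real.sqrt ((x.1 / t + y.1) ^ 2 + (x.2 / t + y.2) ^ 2) ≤ lam - 1 / t},
    (Real.sqrt ((1 - lam) ^ 2 - (y.1 ^ 2 + y.2 ^ 2)))⁻¹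

/-!
For `λ ≤ ε/4`, the triangle inequality gives `|y| ≤ λ - 1/t + |x|/t ≤ 1 - λ - ε/2` on `D_λ`,
so the kernel is at most `2/ε` there, while `D_λ` lies in a square of side `2λ`: thus
`I(λ) ≤ 8λ²/ε`. For `λ > ε/4` it suffices that `∫_{|y|<R} (R² - |y|²)^{-1/2} dy = 2πR`,
which Fubini reduces to `∫_{-b}^{b} (b² - s²)^{-1/2} ds = π` (an `arcsin`). Hence `λ⁻² I(λ)` is
bounded on `[2/t, 1]` uniformly in `(t, x)`.
-/

open Set
open scoped ENNReal

theorem integral_le_of_lintegral_ofReal_le {α : Type*} [MeasurableSpace α] {μ : Measure α}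
    {f : α → ℝ} {c : ℝ} (hf : ∀ a, 0 ≤ f a) (hc : 0 ≤ c)
    (h : ∫⁻ a, ENNReal.ofReal (f a) ∂μ ≤ ENNReal.ofReal c) : ∫ a, f a ∂μ ≤ c := by
  have key := enorm_integral_le_lintegral_enorm f (μ := μ)
  simp_rw [Real.enorm_of_nonneg (hf _), Real.enorm_of_nonneg (integral_nonneg hf)] at key
  exact (ENNReal.ofReal_le_ofReal_iff hc).1 (key.trans h)

theorem sqrt_sq_add_sq_le_add (a b c d : ℝ) :
    √(a ^ 2 + b ^ 2) ≤ √((c + a) ^ 2 + (d + b) ^ 2) + √(c ^ 2 + d ^ 2) := by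
  simpa [Complex.norm_eq_sqrt_sq_add_sq] using
    norm_sub_le (⟨c + a, d + b⟩ : ℂ) ⟨c, d⟩

theorem sqrt_div_sq_add_div_sq {t : ℝ} (ht : 0 ≤ t) (a b : ℝ) :
    √((a / t) ^ 2 + (b / t) ^ 2) = √(a ^ 2 + b ^ 2) / t := by
  rw [div_pow, div_pow, ← add_div, Real.sqrt_div' _ (sq_nonneg t), Real.sqrt_sq ht]

theorem mem_Ioo_neg_iff_sq_lt {a b : ℝ} (hb : 0 ≤ b) : a ∈ Ioo (-b) b ↔ a ^ 2 < b ^ 2 :=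
  ⟨fun h => sq_lt_sq' h.1 h.2, fun h => abs_lt_of_sq_lt_sq' h hb⟩

theorem hasDerivAt_arcsin_div {b s : ℝ} (hs : s ∈ Ioo (-b) b) :
    HasDerivAt (fun s => arcsin (s / b)) (√(b ^ 2 - s ^ 2))⁻¹ s := by
  obtain ⟨h₁, h₂⟩ := hs
  have hb : 0 < b := by linarith
  have hd := (Real.hasDerivAt_arcsin (x := s / b) (by rw [ne_eq, div_eq_iff hb.ne']; linarith)
    (by rw [ne_eq, div_eq_iff hb.ne']; linarith)).comp s ((hasDerivAt_id s).div_const b)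
  refine hd.congr_deriv ?_
  have hfactor : b ^ 2 - s ^ 2 = b ^ 2 * (1 - (s / b) ^ 2) := by field_simp
  rw [hfactor, Real.sqrt_mul (sq_nonneg b), Real.sqrt_sq hb.le]
  field_simp

-- As `√` vanishes on negative numbers, this integrand vanishes off `(-√c, √c)` (and the next one
-- off the open disc), so both can be integrated over the whole space.
theorem lintegral_inv_sqrt_sub_sq {c : ℝ} (hc : 0 < c) :
    ∫⁻ s : ℝ, ENNReal.ofReal (√(c - s ^ 2))⁻¹ = ENNReal.ofReal π := by
  set b := √c
  have hb : 0 < b := Real.sqrt_pos.2 hc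
  have hcb : c = b ^ 2 := (Real.sq_sqrt hc.le).symm
  have hsupp : (fun s : ℝ => ENNReal.ofReal (√(c - s ^ 2))⁻¹).support ⊆ Ioo (-b) b := by
    intro s hs
    by_contra hsb
    rw [mem_Ioo_neg_iff_sq_lt hb.le, not_lt, ← hcb, ← sub_nonpos] at hsb
    simp [Real.sqrt_eq_zero_of_nonpos hsb] at hs
  have hderiv : ∀ s ∈ Ioo (-b) b, HasDerivAt (fun s => arcsin (s / b)) (√(c - s ^ 2))⁻¹ s := by
    rw [hcb]; exact fun s hs => hasDerivAt_arcsin_div hs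
  have hcont : ContinuousOn (fun s => arcsin (s / b)) (Icc (-b) b) := by fun_prop
  have hint : IntegrableOn (fun s => (√(c - s ^ 2))⁻¹) (Ioc (-b) b) :=
    intervalIntegral.integrableOn_deriv_of_nonneg hcont hderiv (fun _ _ => by positivity)
  have hftc : ∫ s in (-b)..b, (√(c - s ^ 2))⁻¹ = π := by
    rw [intervalIntegral.integral_eq_sub_of_hasDerivAt_of_le (by linarith) hcont hderiv
      ((intervalIntegrable_iff_integrableOn_Ioc_of_le (by linarith)).2 hint)]
    simp [hb.ne', arcsin_one]
  rw [← setLIntegral_eq_of_support_subset hsupp, setLIntegral_congr Ioo_ae_eq_Ioc,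
    ← ofReal_integral_eq_lintegral_ofReal hint (ae_of_all _ fun _ => by positivity),
    ← intervalIntegral.integral_of_le (by linarith), hftc]

theorem lintegral_inv_sqrt_sq_sub_sq_add_sq {R : ℝ} (hR : 0 ≤ R) :
    ∫⁻ y : ℝ × ℝ, ENNReal.ofReal (√(R ^ 2 - (y.1 ^ 2 + y.2 ^ 2)))⁻¹ =
      ENNReal.ofReal (2 * π * R) := by
  have hslice (y₁ : ℝ) : ∫⁻ y₂ : ℝ, ENNReal.ofReal (√(R ^ 2 - (y₁ ^ 2 + y₂ ^ 2)))⁻¹ =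
      (Ioo (-R) R).indicator (fun _ => ENNReal.ofReal π) y₁ := by
    simp_rw [← sub_sub]
    by_cases hy : y₁ ∈ Ioo (-R) R
    · rw [indicator_of_mem hy, lintegral_inv_sqrt_sub_sq]
      rwa [sub_pos, ← mem_Ioo_neg_iff_sq_lt hR]
    · rw [mem_Ioo_neg_iff_sq_lt hR, not_lt] at hy
      have hzero (y₂ : ℝ) : √(R ^ 2 - y₁ ^ 2 - y₂ ^ 2) = 0 :=
        Real.sqrt_eq_zero_of_nonpos (by nlinarith [sq_nonneg y₂])
      simp [hzero, mem_Ioo_neg_iff_sq_lt hR, hy]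
  rw [Measure.volume_eq_prod, lintegral_prod _ (by fun_prop)]
  simp_rw [hslice]
  rw [lintegral_indicator_const measurableSet_Ioo, Real.volume_Ioo,
    ← ENNReal.ofReal_mul pi_pos.le]
  ring_nf

theorem Ikern_nonneg (t : ℝ) (x : ℝ × ℝ) (lam : ℝ) : 0 ≤ Ikern t x lam :=
  integral_nonneg fun _ => inv_nonneg.2 (Real.sqrt_nonneg _)

theorem Ikern_le_two_pi_mul (t : ℝ) (x : ℝ × ℝ) {lam : ℝ} (hlam : lam ≤ 1) :
    Ikern t x lam ≤ 2 * π * (1 - lam) := by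
  refine integral_le_of_lintegral_ofReal_le (fun _ => by positivity)
    (mul_nonneg (by positivity) (by linarith)) ?_
  rw [← lintegral_inv_sqrt_sq_sub_sq_add_sq (by linarith)]
  exact setLIntegral_le_lintegral _ _

theorem Ikern_le_of_le_quarter {t ε lam : ℝ} {x : ℝ × ℝ} (ht : 0 ≤ t) (hε : 0 < ε)
    (hx : √((x.1 / t) ^ 2 + (x.2 / t) ^ 2) ≤ 1 - ε) (hlam0 : 0 ≤ lam) (hlam : lam ≤ ε / 4) :
    Ikern t x lam ≤ 8 / ε * lam ^ 2 := by
  set D := {y : ℝ × ℝ | √(y.1 ^ 2 + y.2 ^ 2) ≤ 1 - lam ∧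
      √((x.1 / t + y.1) ^ 2 + (x.2 / t + y.2) ^ 2) ≤ lam - 1 / t}
  have ht' : 0 ≤ 1 / t := by positivity
  have hkernel : ∀ y ∈ D, ENNReal.ofReal (√((1 - lam) ^ 2 - (y.1 ^ 2 + y.2 ^ 2)))⁻¹ ≤
      ENNReal.ofReal (2 / ε) := by
    rintro y ⟨-, hy⟩
    have hnorm := (sqrt_sq_add_sq_le_add y.1 y.2 (x.1 / t) (x.2 / t)).trans (add_le_add hy hx)
    have hgap : (ε / 2) ^ 2 ≤ (1 - lam) ^ 2 - (y.1 ^ 2 + y.2 ^ 2) := by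
      have hr : √(y.1 ^ 2 + y.2 ^ 2) ^ 2 = y.1 ^ 2 + y.2 ^ 2 := Real.sq_sqrt (by positivity)
      have hr0 := Real.sqrt_nonneg (y.1 ^ 2 + y.2 ^ 2)
      have hr1 : √(y.1 ^ 2 + y.2 ^ 2) + ε / 2 ≤ 1 - lam := by linarith
      nlinarith
    refine ENNReal.ofReal_le_ofReal ?_
    rw [← inv_div]
    exact inv_anti₀ (by positivity) (Real.le_sqrt_of_sq_le hgap)
  have hvol : volume D ≤ ENNReal.ofReal (2 * lam) * ENNReal.ofReal (2 * lam) := by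
    have hsub :
        D ⊆ Metric.closedBall (-(x.1 / t)) lam ×ˢ Metric.closedBall (-(x.2 / t)) lam := by
      rintro y ⟨-, hy⟩
      have hlam_sub := hy.trans (sub_le_self lam ht')
      simp only [mem_prod, Metric.mem_closedBall, Real.dist_eq, sub_neg_eq_add]
      constructor
      · rw [add_comm]
        exact (Real.abs_le_sqrt (le_add_of_nonneg_right (sq_nonneg _))).trans hlam_sub
      · rw [add_comm]
        exact (Real.abs_le_sqrt (le_add_of_nonneg_left (sq_nonneg _))).trans hlam_sub
    calc volume D ≤ _ := measure_mono hsub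
      _ = _ := by simp only [Measure.volume_eq_prod, Measure.prod_prod, Real.volume_closedBall]
  refine integral_le_of_lintegral_ofReal_le (fun _ => by positivity) (by positivity) ?_
  calc ∫⁻ y in D, ENNReal.ofReal (√((1 - lam) ^ 2 - (y.1 ^ 2 + y.2 ^ 2)))⁻¹
      ≤ ∫⁻ _ in D, ENNReal.ofReal (2 / ε) := setLIntegral_mono measurable_const hkernel
    _ = ENNReal.ofReal (2 / ε) * volume D := setLIntegral_const _ _
    _ ≤ ENNReal.ofReal (2 / ε) * (ENNReal.ofReal (2 * lam) * ENNReal.ofReal (2 * lam)) := by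
      gcongr
    _ = ENNReal.ofReal (8 / ε * lam ^ 2) := by
      rw [← ENNReal.ofReal_mul (by positivity), ← ENNReal.ofReal_mul (by positivity)]
      ring_nf

theorem inv_sq_mul_Ikern_le {t ε lam : ℝ} {x : ℝ × ℝ} (ht : 0 ≤ t) (hε : 0 < ε)
    (hx : √((x.1 / t) ^ 2 + (x.2 / t) ^ 2) ≤ 1 - ε) (hlam0 : 0 < lam) (hlam1 : lam ≤ 1) :
    lam⁻¹ ^ 2 * Ikern t x lam ≤ 8 / ε + 32 * π / ε ^ 2 := by
  rcases le_or_gt lam (ε / 4) with hsmall | hlarge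
  · calc lam⁻¹ ^ 2 * Ikern t x lam ≤ lam⁻¹ ^ 2 * (8 / ε * lam ^ 2) := by
          gcongr; exact Ikern_le_of_le_quarter ht hε hx hlam0.le hsmall
      _ = 8 / ε := by field_simp
      _ ≤ 8 / ε + 32 * π / ε ^ 2 := le_add_of_nonneg_right (by positivity)
  · have hinv : lam⁻¹ ≤ 4 / ε := by
      rw [← inv_div]; exact inv_anti₀ (by positivity) hlarge.le
    calc lam⁻¹ ^ 2 * Ikern t x lam ≤ (4 / ε) ^ 2 * (2 * π) := by
          gcongr
          · exact Ikern_nonneg t x lam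
          · exact (Ikern_le_two_pi_mul t x hlam1).trans (by nlinarith [pi_pos])
      _ = 32 * π / ε ^ 2 := by ring
      _ ≤ 8 / ε + 32 * π / ε ^ 2 := le_add_of_nonneg_left (by positivity)

/-- Kirchhoff kernel integral bound away from the light cone:
for every `ε₀ > 0` there is `C(ε₀)` with `∫_{2/t}^1 λ⁻² I(λ) dλ ≤ C(ε₀)` whenever
`(t,x) ∈ K`, `t ≥ 2` and `(t−|x|)/t > ε₀`. -/
theorem kirchhoff_kernel_interior (ε0 : ℝ) (hε0 : 0 < ε0) :
    ∃ C > 0, ∀ (t : ℝ) (x : ℝ × ℝ),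
      ((t, x) : Pt) ∈ Kset → 2 ≤ t →
      ε0 < (t - rad (t, x)) / t →
      ∫ lam in (2 / t)..1, lam⁻¹ ^ 2 * Ikern t x lam ≤ C := by
  refine ⟨8 / ε0 + 32 * π / ε0 ^ 2, by positivity, fun t x _ ht hε => ?_⟩
  have ht0 : 0 < t := by linarith
  have h2t : 2 / t ≤ 1 := (div_le_one ht0).2 ht
  have hx : √((x.1 / t) ^ 2 + (x.2 / t) ^ 2) ≤ 1 - ε0 := by
    rw [sqrt_div_sq_add_div_sq ht0.le]
    rw [sub_div, div_self ht0.ne'] at hε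
    unfold rad at hε
    linarith
  have hbound : ∀ lam ∈ uIoc (2 / t) 1,
      ‖lam⁻¹ ^ 2 * Ikern t x lam‖ ≤ 8 / ε0 + 32 * π / ε0 ^ 2 := by
    intro lam hlam
    rw [uIoc_of_le h2t] at hlam
    have hlam0 : 0 < lam := lt_trans (by positivity) hlam.1
    rw [Real.norm_of_nonneg (mul_nonneg (by positivity) (Ikern_nonneg t x lam))]
    exact inv_sq_mul_Ikern_le ht0.le hε0 hx hlam0 hlam.2
  calc ∫ lam in (2 / t)..1, lam⁻¹ ^ 2 * Ikern t x lam
      ≤ ‖∫ lam in (2 / t)..1, lam⁻¹ ^ 2 * Ikern t x lam‖ := Real.le_norm_self _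
    _ ≤ (8 / ε0 + 32 * π / ε0 ^ 2) * |1 - 2 / t| :=
      intervalIntegral.norm_integral_le_of_norm_le_const hbound
    _ ≤ 8 / ε0 + 32 * π / ε0 ^ 2 := by
      rw [abs_of_nonneg (by linarith)]
      exact mul_le_of_le_one_right (by positivity) (sub_le_self _ (by positivity))
end
end

section
/- (Equation satisfied by the normal-form transformed Klein–Gordon unknown.) Let P^{αβ} (α,β ∈ {0,1,2}) be a symmetric constant matrix, let u be a C³ function and v a C² function on an open subset of ℝ×ℝ² satisfying □v + v = P^{αβ}∂_α u ∂_β u. Define w := v − P^{αβ}∂_α u ∂_β u. Then □w + w = −2 P^{αβ}( ∂_α u · ∂_β(□u) + m^{α'β'} ∂_{α'}∂_α u · ∂_{β'}∂_β u ), where m^{α'β'} is the Minkowski metric diag(1,−1,−1). -/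
noncomputable section

open Real MeasureTheory

/-- The Minkowski metric `m = diag(1, −1, −1)` on `ℝ^{1+2}`. -/
def mink (α β : Fin 3) : ℝ := if α = β then (if α = 0 then 1 else -1) else 0

/-! `Box` is a constant-coefficient second-order operator, so the Leibniz rule gives
`□(fg) = □f · g + 2 Q₀(f, g) + f · □g` with `Q₀(f, g) = m^{αβ} ∂_α f ∂_β g`, and `□` commutes with
each `∂_α` on `C³` functions. Applied to `P^{αβ} ∂_α u ∂_β u` with `P` symmetric, this yields
`□(P^{αβ} ∂_α u ∂_β u) = 2 P^{αβ} (∂_α u ∂_β □u + Q₀(∂_α u, ∂_β u))`; since `□w + w` equals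
`(□v + v − P^{αβ} ∂_α u ∂_β u) − □(P^{αβ} ∂_α u ∂_β u)`, the equation for `v` leaves only that term. -/

open Filter Topology

lemma ContDiffAt.eventually_differentiableAt {𝕜 E F : Type*} [NontriviallyNormedField 𝕜]
    [NormedAddCommGroup E] [NormedSpace 𝕜 E] [NormedAddCommGroup F] [NormedSpace 𝕜 F]
    {f : E → F} {x : E} {n : WithTop ℕ∞} (hf : ContDiffAt 𝕜 n f x) (hn : 1 ≤ n) :
    ∀ᶠ y in 𝓝 x, DifferentiableAt 𝕜 f y :=
  ((hf.of_le hn).eventually (by simp)).mono fun _ hy => hy.differentiableAt one_ne_zero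

lemma pd_congr {f g : Pt → ℝ} {p : Pt} (h : f =ᶠ[𝓝 p] g) (γ : Fin 3) : pd γ f p = pd γ g p := by
  simp only [pd, h.fderiv_eq]

lemma pd_sub {f g : Pt → ℝ} {p : Pt} (hf : DifferentiableAt ℝ f p) (hg : DifferentiableAt ℝ g p)
    (γ : Fin 3) : pd γ (fun q => f q - g q) p = pd γ f p - pd γ g p := by
  simp [pd, fderiv_fun_sub hf hg]

lemma pd_add {f g : Pt → ℝ} {p : Pt} (hf : DifferentiableAt ℝ f p) (hg : DifferentiableAt ℝ g p)
    (γ : Fin 3) : pd γ (fun q => f q + g q) p = pd γ f p + pd γ g p := by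
  simp [pd, fderiv_fun_add hf hg]

lemma pd_mul {f g : Pt → ℝ} {p : Pt} (hf : DifferentiableAt ℝ f p) (hg : DifferentiableAt ℝ g p)
    (γ : Fin 3) : pd γ (fun q => f q * g q) p = pd γ f p * g p + f p * pd γ g p := by
  simp only [pd, fderiv_fun_mul hf hg, add_apply, smul_apply, smul_eq_mul]
  ring

lemma ContDiffAt.pd {f : Pt → ℝ} {p : Pt} {m n : WithTop ℕ∞} (hf : ContDiffAt ℝ n f p)
    (hmn : m + 1 ≤ n) (γ : Fin 3) : ContDiffAt ℝ m (pd γ f) p :=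
  (hf.fderiv_right hmn).clm_apply contDiffAt_const

lemma pd_pd_eq_iteratedFDeriv {f : Pt → ℝ} {p : Pt} (hf : ContDiffAt ℝ 2 f p) (γ δ : Fin 3) :
    pd γ (pd δ f) p = iteratedFDeriv ℝ 2 f p ![dir γ, dir δ] := by
  have hdf : DifferentiableAt ℝ (fderiv ℝ f) p :=
    (hf.fderiv_right (m := 1) le_rfl).differentiableAt one_ne_zero
  have h := fderiv_clm_apply hdf (differentiableAt_const (dir δ))
  change fderiv ℝ (fun q => fderiv ℝ f q (dir δ)) p (dir γ) = _
  simp [iteratedFDeriv_two_apply, h]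

lemma pd_comm {f : Pt → ℝ} {p : Pt} (hf : ContDiffAt ℝ 2 f p) (γ δ : Fin 3) :
    pd γ (pd δ f) p = pd δ (pd γ f) p := by
  rw [pd_pd_eq_iteratedFDeriv hf, pd_pd_eq_iteratedFDeriv hf, iteratedFDeriv_two_apply,
    iteratedFDeriv_two_apply]
  exact (hf.isSymmSndFDerivAt (by simp [minSmoothness_of_isRCLikeNormedField])).eq _ _

lemma box_eq_iteratedFDeriv {f : Pt → ℝ} {p : Pt} (hf : ContDiffAt ℝ 2 f p) :
    Box f p = iteratedFDeriv ℝ 2 f p ![dir 0, dir 0] - iteratedFDeriv ℝ 2 f p ![dir 1, dir 1]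
      - iteratedFDeriv ℝ 2 f p ![dir 2, dir 2] := by
  simp only [Box, pd_pd_eq_iteratedFDeriv hf]

lemma box_sub {f g : Pt → ℝ} {p : Pt} (hf : ContDiffAt ℝ 2 f p) (hg : ContDiffAt ℝ 2 g p) :
    Box (fun q => f q - g q) p = Box f p - Box g p := by
  simp only [box_eq_iteratedFDeriv (hf.sub hg), box_eq_iteratedFDeriv hf, box_eq_iteratedFDeriv hg,
    fun_iteratedFDeriv_sub_apply hf hg, sub_apply]
  ring

lemma box_sum {ι : Type*} (s : Finset ι) {f : ι → Pt → ℝ} {p : Pt}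
    (hf : ∀ i ∈ s, ContDiffAt ℝ 2 (f i) p) :
    Box (fun q => ∑ i ∈ s, f i q) p = ∑ i ∈ s, Box (f i) p := by
  rw [box_eq_iteratedFDeriv (ContDiffAt.sum hf), iteratedFDeriv_fun_sum_apply hf]
  simp only [sum_apply, ← Finset.sum_sub_distrib]
  exact Finset.sum_congr rfl fun i hi => (box_eq_iteratedFDeriv (hf i hi)).symm

lemma box_const_mul (c : ℝ) {f : Pt → ℝ} {p : Pt} (hf : ContDiffAt ℝ 2 f p) :
    Box (fun q => c * f q) p = c * Box f p := by
  change Box (fun q => c • f q) p = _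
  rw [box_eq_iteratedFDeriv (hf.const_smul c), iteratedFDeriv_const_smul_apply' hf,
    box_eq_iteratedFDeriv hf]
  simp only [smul_apply, smul_eq_mul]
  ring

lemma pd_pd_mul {f g : Pt → ℝ} {p : Pt} (hf : ContDiffAt ℝ 2 f p) (hg : ContDiffAt ℝ 2 g p)
    (γ δ : Fin 3) :
    pd γ (pd δ (fun q => f q * g q)) p = pd γ (pd δ f) p * g p + pd δ f p * pd γ g p
      + (pd γ f p * pd δ g p + f p * pd γ (pd δ g) p) := by
  have hleibniz : pd δ (fun q => f q * g q) =ᶠ[𝓝 p] fun q => pd δ f q * g q + f q * pd δ g q :=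
    ((hf.eventually_differentiableAt one_le_two).and
      (hg.eventually_differentiableAt one_le_two)).mono fun q hq => pd_mul hq.1 hq.2 δ
  have hf' := (hf.pd (m := 1) le_rfl δ).differentiableAt one_ne_zero
  have hg' := (hg.pd (m := 1) le_rfl δ).differentiableAt one_ne_zero
  have hf1 := hf.differentiableAt two_ne_zero
  have hg1 := hg.differentiableAt two_ne_zero
  rw [pd_congr hleibniz, pd_add (hf'.fun_mul hg1) (hf1.fun_mul hg'), pd_mul hf' hg1, pd_mul hf1 hg']

def nullForm (f g : Pt → ℝ) (p : Pt) : ℝ :=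
  ∑ α : Fin 3, ∑ β : Fin 3, mink α β * pd α f p * pd β g p

lemma box_mul {f g : Pt → ℝ} {p : Pt} (hf : ContDiffAt ℝ 2 f p) (hg : ContDiffAt ℝ 2 g p) :
    Box (fun q => f q * g q) p = Box f p * g p + 2 * nullForm f g p + f p * Box g p := by
  simp only [Box, nullForm, pd_pd_mul hf hg, mink, Fin.sum_univ_three, Fin.isValue, Fin.reduceEq,
    ↓reduceIte]
  ring

lemma pd_box {u : Pt → ℝ} {p : Pt} (hu : ContDiffAt ℝ 3 u p) (α : Fin 3) :
    pd α (Box u) p = Box (pd α u) p := by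
  have hcomm : ∀ γ, pd α (pd γ (pd γ u)) p = pd γ (pd γ (pd α u)) p := fun γ => by
    have hswap : pd α (pd γ u) =ᶠ[𝓝 p] pd γ (pd α u) :=
      (hu.eventually (by simp)).mono fun q hq => pd_comm (hq.of_le (by norm_num)) α γ
    rw [pd_comm (hu.pd (by norm_num) γ) α γ, pd_congr hswap]
  have hd : ∀ γ, DifferentiableAt ℝ (pd γ (pd γ u)) p := fun γ =>
    ((hu.pd (m := 2) (by norm_num) γ).pd (m := 1) (by norm_num) γ).differentiableAt one_ne_zero
  change pd α (fun q => pd 0 (pd 0 u) q - pd 1 (pd 1 u) q - pd 2 (pd 2 u) q) p = _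
  rw [pd_sub ((hd 0).fun_sub (hd 1)) (hd 2), pd_sub (hd 0) (hd 1), hcomm, hcomm, hcomm]
  rfl

lemma sum_sum_mul_mul_comm_of_symm {ι : Type*} [Fintype ι] {P : ι → ι → ℝ}
    (hP : ∀ i j, P i j = P j i) (a b : ι → ℝ) :
    ∑ i, ∑ j, P i j * (a i * b j) = ∑ i, ∑ j, P i j * (b i * a j) := by
  rw [Finset.sum_comm]
  simp only [hP, mul_comm (a _)]

lemma box_sum_sum_mul_pd_mul_pd {P : Fin 3 → Fin 3 → ℝ} (hP : ∀ α β, P α β = P β α)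
    {u : Pt → ℝ} {p : Pt} (hu : ContDiffAt ℝ 3 u p) :
    Box (fun q => ∑ α : Fin 3, ∑ β : Fin 3, P α β * pd α u q * pd β u q) p
      = 2 * ∑ α : Fin 3, ∑ β : Fin 3, P α β *
          (pd α u p * pd β (Box u) p + nullForm (pd α u) (pd β u) p) := by
  have hdu : ∀ α, ContDiffAt ℝ 2 (pd α u) p := fun α => hu.pd (by norm_num) α
  have hswap := sum_sum_mul_mul_comm_of_symm hP (fun α => pd α (Box u) p) (fun β => pd β u p)
  simp_rw [mul_assoc]
  have hterm : ∀ α β, ContDiffAt ℝ 2 (fun q => P α β * (pd α u q * pd β u q)) p :=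
    fun α β => contDiffAt_const.mul ((hdu α).mul (hdu β))
  rw [box_sum _ fun α _ => ContDiffAt.sum fun β _ => hterm α β]
  simp only [box_sum _ fun β _ => hterm _ β, box_const_mul _ ((hdu _).mul (hdu _)),
    box_mul (hdu _) (hdu _), ← pd_box hu]
  simp only [mul_add, Finset.sum_add_distrib, hswap, mul_left_comm (P _ _) 2, ← Finset.mul_sum]
  ring

/-- Equation satisfied by the normal-form transformed Klein–Gordon unknown
`w := v − P^{αβ}∂_α u ∂_β u`. -/
theorem normal_form_equation (P : Fin 3 → Fin 3 → ℝ) (hPsymm : ∀ α β, P α β = P β α)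
    (Ω : Set Pt) (hΩ : IsOpen Ω) (u v : Pt → ℝ)
    (hu : ContDiffOn ℝ 3 u Ω) (hv : ContDiffOn ℝ 2 v Ω)
    (heq : ∀ p ∈ Ω, Box v p + v p = ∑ α : Fin 3, ∑ β : Fin 3, P α β * pd α u p * pd β u p) :
    ∀ p ∈ Ω,
      Box (fun q => v q - ∑ α : Fin 3, ∑ β : Fin 3, P α β * pd α u q * pd β u q) p
          + (v p - ∑ α : Fin 3, ∑ β : Fin 3, P α β * pd α u p * pd β u p)
        = -2 * ∑ α : Fin 3, ∑ β : Fin 3, P α β *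
            (pd α u p * pd β (Box u) p
              + ∑ α' : Fin 3, ∑ β' : Fin 3,
                  mink α' β' * pd α' (pd α u) p * pd β' (pd β u) p) := by
  intro p hp
  have hu3 : ContDiffAt ℝ 3 u p := hu.contDiffAt (hΩ.mem_nhds hp)
  have hdu : ∀ α, ContDiffAt ℝ 2 (pd α u) p := fun α => hu3.pd (by norm_num) α
  have hquad : ContDiffAt ℝ 2
      (fun q => ∑ α : Fin 3, ∑ β : Fin 3, P α β * pd α u q * pd β u q) p :=
    ContDiffAt.sum fun α _ => ContDiffAt.sum fun β _ =>
      (contDiffAt_const.mul (hdu α)).mul (hdu β)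
  rw [box_sub (hv.contDiffAt (hΩ.mem_nhds hp)) hquad, box_sum_sum_mul_pd_mul_pd hPsymm hu3]
  simp only [nullForm]
  linarith [heq p hp]
end
end
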